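/- Define W⁽¹⁾(ρ₁,ρ₂) = -(1/(2π)) cot(π(ρ₁+ρ₂)) sin²(πρ₂) - ρ₂/4 + (1/(4π)) sin(2πρ₂) and W⁽²⁾(ρ₁,ρ₂) = W⁽¹⁾(ρ₂,ρ₁). Then for every ρ in the open triangle T, the trace of the Jacobian matrix H_W(ρ) = (∂_{ρⱼ} W⁽ⁱ⁾(ρ)) equals (1/2)·(sin²(πρ₁)+sin²(πρ₂))/sin²(π(ρ₁+ρ₂)), which is strictly positive. -/

import Mathlib

/-!
Only the cotangent term of `W⁽¹⁾` depends on `ρ₁`, and `cot' = -1/sin²`, so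
`∂₁W⁽¹⁾ = sin²(πρ₂) / (2 sin²(π(ρ₁+ρ₂)))`; by the symmetry `W⁽²⁾(ρ₁,ρ₂) = W⁽¹⁾(ρ₂,ρ₁)` the other
diagonal entry is the same with `ρ₁` and `ρ₂` exchanged. Positivity holds because
`sin(πρ₁) > 0` on `T`.
-/

open Real

/-- First component of the vector field `W`. -/
noncomputable def W1 (ρ₁ ρ₂ : ℝ) : ℝ :=
  -(1 / (2 * π)) * Real.cot (π * (ρ₁ + ρ₂)) * (Real.sin (π * ρ₂)) ^ 2
    - ρ₂ / 4 + (1 / (4 * π)) * Real.sin (2 * π * ρ₂)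

/-- Second component of the vector field `W`. -/
noncomputable def W2 (ρ₁ ρ₂ : ℝ) : ℝ := W1 ρ₂ ρ₁

theorem Real.hasDerivAt_cot {x : ℝ} (h : sin x ≠ 0) : HasDerivAt cot (-1 / sin x ^ 2) x := by
  rw [show cot = fun y => cos y / sin y from funext cot_eq_cos_div_sin]
  refine ((hasDerivAt_cos x).div (hasDerivAt_sin x) h).congr_deriv ?_
  rw [← sin_sq_add_cos_sq x]
  ring

theorem sin_pi_mul_pos {x : ℝ} (h0 : 0 < x) (h1 : x < 1) : 0 < sin (π * x) :=
  sin_pos_of_pos_of_lt_pi (by positivity) (by nlinarith [pi_pos])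

theorem hasDerivAt_W1_left {ρ₁ ρ₂ : ℝ} (hs : sin (π * (ρ₁ + ρ₂)) ≠ 0) :
    HasDerivAt (fun a => W1 a ρ₂) (sin (π * ρ₂) ^ 2 / (2 * sin (π * (ρ₁ + ρ₂)) ^ 2)) ρ₁ := by
  have hinner : HasDerivAt (fun a => π * (a + ρ₂)) π ρ₁ := by
    simpa using ((hasDerivAt_id ρ₁).add_const ρ₂).const_mul π
  have hcot := (Real.hasDerivAt_cot hs).comp ρ₁ hinner
  refine ((((hcot.const_mul (-(1 / (2 * π)))).mul_const (sin (π * ρ₂) ^ 2)).sub_const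
    (ρ₂ / 4)).add_const ((1 / (4 * π)) * sin (2 * π * ρ₂))).congr_deriv ?_
  field_simp [pi_ne_zero]

/-- The trace of the Jacobian matrix `H_W(ρ)` equals
`(1/2)(sin²(πρ₁)+sin²(πρ₂))/sin²(π(ρ₁+ρ₂))`, which is strictly positive on `T`. -/
theorem trace_HW (ρ₁ ρ₂ : ℝ) (h1 : 0 < ρ₁) (h2 : 0 < ρ₂) (h12 : ρ₁ + ρ₂ < 1) :
    deriv (fun a => W1 a ρ₂) ρ₁ + deriv (fun b => W2 ρ₁ b) ρ₂
      = (1 / 2) * ((Real.sin (π * ρ₁)) ^ 2 + (Real.sin (π * ρ₂)) ^ 2)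
          / (Real.sin (π * (ρ₁ + ρ₂))) ^ 2 ∧
    0 < (1 / 2) * ((Real.sin (π * ρ₁)) ^ 2 + (Real.sin (π * ρ₂)) ^ 2)
          / (Real.sin (π * (ρ₁ + ρ₂))) ^ 2 := by
  have hs : sin (π * (ρ₁ + ρ₂)) ≠ 0 := (sin_pi_mul_pos (by linarith) h12).ne'
  have hs' : sin (π * (ρ₂ + ρ₁)) ≠ 0 := by rwa [add_comm]
  refine ⟨?_, ?_⟩
  · change _ + deriv (fun b => W1 b ρ₁) ρ₂ = _
    rw [(hasDerivAt_W1_left hs).deriv, (hasDerivAt_W1_left hs').deriv, add_comm ρ₂ ρ₁]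
    field_simp
    ring
  · have := sin_pi_mul_pos h1 (by linarith)
    positivity
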